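/- arXiv:2012.08245 — 2 statements merged into one kernel-verified Lean document; each statement's English description precedes it below -/
import Mathlib

section
/- Under the standing hypotheses, the map m₁^{V⊙W} : X → X satisfies m₁^{V⊙W} ∘ m₁^{V⊙W} = 0. (This is the paper's assertion, Section 3.2.1, that the Rabinowitz–Floer complex Cth₊(V₀⊙W₀, V₁⊙W₁) of a transverse pair of concatenated exact Lagrangian cobordisms, with differential m₁^{V⊙W} = m₁^{W,+0}∘𝐛₁^V + m₁^{V,0−}∘𝚫₁^W, is a chain complex.) -/
/-!
Statement 0 (Legout, Section 3.2.1): the differential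
`m₁^{V⊙W} = m₁^{W,+0}∘𝐛₁^V + m₁^{V,0−}∘𝚫₁^W` on the Rabinowitz–Floer complex
`Cth₊(V₀⊙W₀, V₁⊙W₁)` of a transverse pair of concatenated exact Lagrangian
cobordisms squares to zero.  Algebraic model over `F₂ = ZMod 2`:
`X = P ⊕ Q`, `Y = P ⊕ C`, `Z = C′ ⊕ Q`, `𝔠 = C′ ⊕ C`.
-/

namespace LegoutStmt0

variable {P Q C C' : Type*}
  [AddCommGroup P] [Module (ZMod 2) P]
  [AddCommGroup Q] [Module (ZMod 2) Q]
  [AddCommGroup C] [Module (ZMod 2) C]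
  [AddCommGroup C'] [Module (ZMod 2) C']

/-- `𝚫₁^W : X = P ⊕ Q → Z = C′ ⊕ Q`, `p + q ↦ Δ₁^W(p) + q`. -/
def boldDelta1W (Δ1W : P →ₗ[ZMod 2] C') : (P × Q) →ₗ[ZMod 2] C' × Q :=
  LinearMap.prod (Δ1W ∘ₗ LinearMap.fst (ZMod 2) P Q) (LinearMap.snd (ZMod 2) P Q)

/-- `𝐛₁^V : X → Y = P ⊕ C`, `p + q ↦ p + b₁^V(Δ₁^W(p)) + b₁^V(q)`. -/
def boldB1V (Δ1W : P →ₗ[ZMod 2] C') (b1V : (C' × Q) →ₗ[ZMod 2] C) :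
    (P × Q) →ₗ[ZMod 2] P × C :=
  LinearMap.prod (LinearMap.fst (ZMod 2) P Q) (b1V ∘ₗ boldDelta1W Δ1W)

/-- `𝚫₁^{W⊂W} : Y → 𝔠 = C′ ⊕ C`, `p + c ↦ Δ₁^W(p) + c`. -/
def delta1WW (Δ1W : P →ₗ[ZMod 2] C') : (P × C) →ₗ[ZMod 2] C' × C :=
  LinearMap.prod (Δ1W ∘ₗ LinearMap.fst (ZMod 2) P C) (LinearMap.snd (ZMod 2) P C)

/-- `𝐛₁^{V⊂V} : Z → 𝔠`, `c′ + q ↦ c′ + b₁^V(c′) + b₁^V(q)`. -/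
def b1VV (b1V : (C' × Q) →ₗ[ZMod 2] C) : (C' × Q) →ₗ[ZMod 2] C' × C :=
  LinearMap.prod (LinearMap.fst (ZMod 2) C' Q) b1V

/-- `m₁^{V⊙W} := m₁^{W,+0}∘𝐛₁^V + m₁^{V,0−}∘𝚫₁^W : X → X` (via `P ⊆ X`, `Q ⊆ X`). -/
def m1VoW (mW0 : (P × C) →ₗ[ZMod 2] P) (mV0 : (C' × Q) →ₗ[ZMod 2] Q)
    (Δ1W : P →ₗ[ZMod 2] C') (b1V : (C' × Q) →ₗ[ZMod 2] C) :
    (P × Q) →ₗ[ZMod 2] P × Q :=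
  LinearMap.prod (mW0 ∘ₗ boldB1V Δ1W b1V) (mV0 ∘ₗ boldDelta1W Δ1W)

/-- `m₁^𝔠 : 𝔠 → 𝔠`, `c′ + c ↦ Δ₁^Λ(c′) + b₁^Λ(c′ + c)`. -/
def m1frakc (Δ1L : C' →ₗ[ZMod 2] C') (b1L : (C' × C) →ₗ[ZMod 2] C) :
    (C' × C) →ₗ[ZMod 2] C' × C :=
  LinearMap.prod (Δ1L ∘ₗ LinearMap.fst (ZMod 2) C' C) b1L

/-- The map `m₁^{V⊙W}` squares to zero, i.e. `Cth₊(V₀⊙W₀,V₁⊙W₁)` is a chain complex. -/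
theorem m1VoW_comp_m1VoW_eq_zero
    (mW0 : (P × C) →ₗ[ZMod 2] P) (mWm : (P × C) →ₗ[ZMod 2] C)
    (mVp : (C' × Q) →ₗ[ZMod 2] C') (mV0 : (C' × Q) →ₗ[ZMod 2] Q)
    (Δ1W : P →ₗ[ZMod 2] C') (b1V : (C' × Q) →ₗ[ZMod 2] C)
    (Δ1L : C' →ₗ[ZMod 2] C') (b1L : (C' × C) →ₗ[ZMod 2] C)
    -- (D1) m₁^W ∘ m₁^W = 0
    (hD1 : (LinearMap.prod mW0 mWm) ∘ₗ (LinearMap.prod mW0 mWm) = 0)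
    -- (D2) m₁^V ∘ m₁^V = 0
    (hD2 : (LinearMap.prod mVp mV0) ∘ₗ (LinearMap.prod mVp mV0) = 0)
    -- (S1) m₁^{W,−} = b₁^Λ ∘ 𝚫₁^{W⊂W}
    (hS1 : mWm = b1L ∘ₗ delta1WW Δ1W)
    -- (S2) m₁^{V,+} = Δ₁^Λ ∘ π_{C′}
    (hS2 : mVp = Δ1L ∘ₗ LinearMap.fst (ZMod 2) C' Q)
    -- (R1) Δ₁^W ∘ m₁^{W,+0} = Δ₁^Λ ∘ Δ₁^W ∘ π_P
    (hR1 : Δ1W ∘ₗ mW0 = (Δ1L ∘ₗ Δ1W) ∘ₗ LinearMap.fst (ZMod 2) P C)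
    -- (R2) b₁^V ∘ m₁^V = b₁^Λ ∘ 𝐛₁^{V⊂V}
    (hR2 : b1V ∘ₗ (LinearMap.prod mVp mV0) = b1L ∘ₗ b1VV b1V) :
    (m1VoW mW0 mV0 Δ1W b1V) ∘ₗ (m1VoW mW0 mV0 Δ1W b1V) = 0 := by
  apply LinearMap.ext
  rintro ⟨p, q⟩
  set z : C' × Q := (Δ1W p, q) with hz
  set y : P × C := (p, b1V z) with hy
  have hD1' := LinearMap.congr_fun hD1 y
  have hD2' := LinearMap.congr_fun hD2 z
  have hR1' := LinearMap.congr_fun hR1 y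
  have hR2' := LinearMap.congr_fun hR2 z
  have hS1' := LinearMap.congr_fun hS1 y
  have hS2' := LinearMap.congr_fun hS2 z
  simp only [LinearMap.comp_apply, LinearMap.prod_apply, Function.prod, LinearMap.zero_apply,
    Prod.mk.injEq, delta1WW, b1VV, LinearMap.fst_apply, LinearMap.snd_apply] at *
  -- key: Δ1W (mW0 y) = mVp z
  have hkey : Δ1W (mW0 y) = mVp z := by rw [hR1', hS2']
  have hb : b1V (Δ1W (mW0 y), mV0 z) = mWm y := by
    rw [hkey, hR2', hS1']
  simp only [m1VoW, boldB1V, boldDelta1W, LinearMap.comp_apply, LinearMap.prod_apply,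
    Function.prod, LinearMap.fst_apply, LinearMap.snd_apply, LinearMap.zero_apply,
    Prod.mk.injEq]
  rw [Prod.ext_iff] at hD1' hD2' ⊢
  have hzz : (Δ1W (mW0 (p, b1V (Δ1W p, q))), mV0 (Δ1W p, q)) = (mVp z, mV0 z) := by
    rw [← hkey]
  constructor
  · rw [show b1V (Δ1W (mW0 (p, b1V (Δ1W p, q))), mV0 (Δ1W p, q)) = mWm y by
      rw [hzz, hR2', hS1']]
    exact hD1'.1
  · rw [hzz]
    exact hD2'.2


end LegoutStmt0
end

section
/- Assume: (A) for every d ≥ 1, Σ_{j=1}^{d} Σ_{n=0}^{d−j} Δ^+_{d−j+1}∘( id_E^{⊗(d−j−n)} ⊗ (Δ_j^+ + b_j^+) ⊗ id_E^{⊗n} ) = 0 as maps E^{⊗d} → A₊, where Δ_j^+ + b_j^+ : E^{⊗j} → E via E = A₊ ⊕ B; and (B) for every d ≥ 1, Σ_{j=1}^{d} Σ_{n=0}^{d−j} b^Σ_{d−j+1}∘( id_A^{⊗(d−j−n)} ⊗ m_j ⊗ id_A^{⊗n} ) + Σ_{j=1}^{d} Σ_{(i₁,…,i_j) composition of d} b_j^+∘(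 𝐛^Σ_{i_j} ⊗ ⋯ ⊗ 𝐛^Σ_{i₁} ) = 0 as maps A^{⊗d} → B. Then for every d ≥ 1: Σ_{j=1}^{d} Σ_{n=0}^{d−j} m^+_{d−j+1}∘( id_A^{⊗(d−j−n)} ⊗ m_j ⊗ id_A^{⊗n} ) = 0 as maps A^{⊗d} → A₊, where m^+_k := π₊∘m_k. (This is Equation (relinf+) of the paper, the positive-end component of the A∞-relations for the higher order maps m_d, proved in Section 7.1.1.) -/
open scoped BigOperators

/-!
Statement 9 (Equation (relinf+) of Legout, Section 7.1.1): the positive-end component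
of the A∞-relations for the higher order maps `m_d`.  Multilinear maps
`MultilinearMap (ZMod 2) (fun _ : Fin d => M) N` model linear maps `M^{⊗d} → N`;
`A = A₊ ⊕ A₀ ⊕ A₋` and `E = A₊ ⊕ B`, all identities are stated pointwise on tuples.
-/

namespace LegoutStmt9

/-- Extend a `d`-tuple by zero. -/
def extend {X : Type*} [Zero X] {d : ℕ} (v : Fin d → X) (k : ℕ) : X :=
  if h : k < d then v ⟨k, h⟩ else 0

/-- The tuple obtained from `v : Fin d → X` by applying the `j`-ary operation `m` to the
`j` consecutive entries starting at position `N` (0-indexed) and keeping the remaining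
entries; this is the pointwise form of `id^{⊗(d−j−N)} ⊗ m ⊗ id^{⊗N}` (with the rightmost
tensor factor acting on the first inputs). -/
def ins {X : Type*} [Zero X] {d j : ℕ} (m : (Fin j → X) → X) (N : ℕ) (v : Fin d → X) :
    Fin (d - j + 1) → X :=
  fun i => if (i : ℕ) < N then extend v i
    else if (i : ℕ) = N then m (fun t => extend v (N + (t : ℕ)))
    else extend v ((i : ℕ) + j - 1)

variable {Ap A0 Am B : Type*}
  [AddCommGroup Ap] [Module (ZMod 2) Ap]
  [AddCommGroup A0] [Module (ZMod 2) A0]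
  [AddCommGroup Am] [Module (ZMod 2) Am]
  [AddCommGroup B] [Module (ZMod 2) B]

/-- `𝐛_d^Σ : A^{⊗d} → E = A₊ ⊕ B`: for `d = 1` it is `π₊ + b₁^Σ`, and for `d ≥ 2` it is
`b_d^Σ` composed with the inclusion `B ⊆ E`. -/
def boldBSigma
    (bS : (d : ℕ) → MultilinearMap (ZMod 2) (fun _ : Fin d => Ap × A0 × Am) B)
    (d : ℕ) (v : Fin d → Ap × A0 × Am) : Ap × B :=
  ((if h : d = 1 then (v ⟨0, by omega⟩).1 else 0), bS d v)


/- ============ generic helpers ============ -/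

theorem char2_add_self {M : Type*} [AddCommGroup M] [Module (ZMod 2) M] (x : M) :
    x + x = 0 := by
  have h : ((1 : ZMod 2) + 1) • x = (0 : ZMod 2) • x := by
    congr 1
  simpa [add_smul] using h

theorem char2_eq_of_add_eq_zero {M : Type*} [AddCommGroup M] [Module (ZMod 2) M] {x y : M}
    (h : x + y = 0) : x = y := by
  have h2 := congrArg (· + y) h
  simp only [add_assoc, char2_add_self, add_zero, zero_add] at h2
  exact h2

theorem val_mk {n a : ℕ} (h : a < n) : ((⟨a, h⟩ : Fin n) : ℕ) = a := rfl

theorem apply2_congr {M N : Type*} (f : (k : ℕ) → (Fin k → M) → N) {a b : ℕ} (h : a = b)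
    (x : Fin a → M) (y : Fin b → M)
    (hxy : ∀ (i : ℕ) (hia : i < a) (hib : i < b), x ⟨i, hia⟩ = y ⟨i, hib⟩) :
    f a x = f b y := by
  subst h
  exact congrArg (f a) (funext fun i => hxy i i.2 i.2)

/- ============ list helpers ============ -/

theorem take_succ_sum (l : List ℕ) (k : ℕ) (hk : k < l.length) :
    (l.take (k + 1)).sum = (l.take k).sum + l.getD k 0 := by
  induction l generalizing k with
  | nil => simp at hk
  | cons a l ih =>
    cases k with
    | zero => simp
    | succ k =>
      simp only [List.take_succ_cons, List.sum_cons, List.getD_cons_succ]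
      rw [ih k (by simpa using hk)]
      omega

theorem take_sum_le_sum (l : List ℕ) (k : ℕ) : (l.take k).sum ≤ l.sum := by
  conv_rhs => rw [← List.take_append_drop k l]
  rw [List.sum_append]
  omega

theorem take_sum_mono (l : List ℕ) {i k : ℕ} (h : i ≤ k) :
    (l.take i).sum ≤ (l.take k).sum := by
  have : l.take i = (l.take k).take i := by rw [List.take_take, Nat.min_eq_left h]
  rw [this]
  exact take_sum_le_sum _ _

theorem take_sum_decomp (l : List ℕ) {k i : ℕ} (hk : k < i) (hi : i ≤ l.length) :
    (l.take i).sum = (l.take k).sum + l.getD k 0 + ((l.drop (k + 1)).take (i - k - 1)).sum := by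
  have h1 : i = (k + 1) + (i - k - 1) := by omega
  conv_lhs => rw [h1]
  rw [List.take_add, List.sum_append, take_succ_sum l k (by omega)]

theorem getD_pos_of_mem_pos {l : List ℕ} (hl : ∀ x ∈ l, 0 < x) {k : ℕ} (hk : k < l.length) :
    0 < l.getD k 0 := by
  rw [List.getD_eq_getElem l 0 hk]
  exact hl _ (List.getElem_mem hk)

theorem take_set_of_le (l : List ℕ) (k : ℕ) (a : ℕ) {i : ℕ} (h : i ≤ k) :
    (l.set k a).take i = l.take i := by
  induction l generalizing k i with
  | nil => simp
  | cons b l ih =>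
    cases k with
    | zero =>
      have hi : i = 0 := by omega
      simp [hi]
    | succ k =>
      cases i with
      | zero => simp
      | succ i => simp [ih k (i := i) (by omega)]

theorem drop_succ_set (l : List ℕ) (k a : ℕ) : (l.set k a).drop (k + 1) = l.drop (k + 1) := by
  induction l generalizing k with
  | nil => simp
  | cons b l ih =>
    cases k with
    | zero => simp
    | succ k => simpa using ih k

theorem getD_set_self (l : List ℕ) {k : ℕ} (a : ℕ) (hk : k < l.length) :
    (l.set k a).getD k 0 = a := by
  rw [List.getD_eq_getElem _ 0 (by simpa using hk)]
  simp

theorem getD_set_ne (l : List ℕ) {k i : ℕ} (a : ℕ) (h : i ≠ k) :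
    (l.set k a).getD i 0 = l.getD i 0 := by
  induction l generalizing k i with
  | nil => simp
  | cons b l ih =>
    cases k with
    | zero => cases i with
      | zero => omega
      | succ i => simp
    | succ k =>
      cases i with
      | zero => simp
      | succ i => simpa using ih (k := k) (by omega)

theorem set_getD_self (l : List ℕ) (k : ℕ) : l.set k (l.getD k 0) = l := by
  induction l generalizing k with
  | nil => simp
  | cons b l ih =>
    cases k with
    | zero => simp
    | succ k => simpa using ih k

theorem sum_set_nat (l : List ℕ) {k : ℕ} (a : ℕ) (hk : k < l.length) :
    (l.set k a).sum + l.getD k 0 = l.sum + a := by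
  induction l generalizing k with
  | nil => simp at hk
  | cons b l ih =>
    cases k with
    | zero => simp; omega
    | succ k =>
      simp only [List.set_cons_succ, List.sum_cons, List.getD_cons_succ]
      have := ih (k := k) (by simpa using hk)
      omega

theorem sum_take_drop (l : List ℕ) (k : ℕ) (hk : k < l.length) :
    (l.take k).sum + l.getD k 0 + (l.drop (k + 1)).sum = l.sum := by
  conv_rhs => rw [← List.take_append_drop (k + 1) l]
  rw [List.sum_append, take_succ_sum l k hk]

theorem drop_append_left {α : Type*} (A B : List α) (k : ℕ) (h : A.length = k) :
    (A ++ B).drop k = B := by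
  subst h; exact List.drop_left

/- ============ index of a position in a composition (list form) ============ -/

def idx : List ℕ → ℕ → ℕ
  | [], _ => 0
  | a :: l, n => if n < a then 0 else idx l (n - a) + 1

theorem idx_spec (l : List ℕ) (n : ℕ) (h : n < l.sum) :
    idx l n < l.length ∧ (l.take (idx l n)).sum ≤ n ∧ n < (l.take (idx l n + 1)).sum := by
  induction l generalizing n with
  | nil => simp at h
  | cons a l ih =>
    by_cases hn : n < a
    · simp [idx, hn]
    · have h' : n - a < l.sum := by simp at h; omega
      obtain ⟨h1, h2, h3⟩ := ih (n - a) h'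
      simp only [idx, if_neg hn, List.length_cons, List.take_succ_cons, List.sum_cons]
      omega

theorem idx_unique (l : List ℕ) (n k : ℕ) (hk : k < l.length)
    (h1 : (l.take k).sum ≤ n) (h2 : n < (l.take (k + 1)).sum) : idx l n = k := by
  induction l generalizing n k with
  | nil => simp at hk
  | cons a l ih =>
    cases k with
    | zero =>
      simp at h2
      simp [idx, h2]
    | succ k =>
      simp only [List.take_succ_cons, List.sum_cons] at h1 h2
      have hna : ¬ n < a := by omega
      simp only [idx, if_neg hna, Nat.succ_eq_add_one, add_left_inj]
      exact ih (n - a) k (by simpa using hk) (by omega) (by omega)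

/- ============ compositions as lists ============ -/

def cs (n : ℕ) : Finset (List ℕ) := Finset.univ.image fun c : Composition n => c.blocks

theorem mem_cs {n : ℕ} {l : List ℕ} : l ∈ cs n ↔ (∀ x ∈ l, 0 < x) ∧ l.sum = n := by
  constructor
  · intro h
    simp only [cs, Finset.mem_image] at h
    obtain ⟨c, -, rfl⟩ := h
    exact ⟨fun x hx => c.blocks_pos hx, c.blocks_sum⟩
  · rintro ⟨h1, h2⟩
    simp only [cs, Finset.mem_image]
    exact ⟨⟨l, fun hx => h1 _ hx, h2⟩, Finset.mem_univ _, rfl⟩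

theorem sum_cs {M : Type*} [AddCommMonoid M] (n : ℕ) (f : List ℕ → M) :
    ∑ l ∈ cs n, f l = ∑ c : Composition n, f c.blocks := by
  rw [cs, Finset.sum_image]
  intro c _ c' _ h
  exact Composition.ext h

/- ============ evaluation lemmas for ins / extend ============ -/

theorem extend_pos {X : Type*} [Zero X] {e : ℕ} (v : Fin e → X) {q : ℕ} (h : q < e) :
    extend v q = v ⟨q, h⟩ := dif_pos h

theorem extend_congr {X : Type*} [Zero X] {e : ℕ} (v : Fin e → X) {q q' : ℕ} (h : q = q') :
    extend v q = extend v q' := by rw [h]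

theorem ins_eval_lt {X : Type*} [Zero X] {e j : ℕ} (mm : (Fin j → X) → X) (N : ℕ)
    (v : Fin e → X) (i : Fin (e - j + 1)) (h : (i : ℕ) < N) :
    ins mm N v i = extend v i := by rw [ins, if_pos h]

theorem ins_eval_eq {X : Type*} [Zero X] {e j : ℕ} (mm : (Fin j → X) → X) (N : ℕ)
    (v : Fin e → X) (i : Fin (e - j + 1)) (h : (i : ℕ) = N) :
    ins mm N v i = mm (fun t => extend v (N + (t : ℕ))) := by
  rw [ins, if_neg (by omega), if_pos h]

theorem ins_eval_gt {X : Type*} [Zero X] {e j : ℕ} (mm : (Fin j → X) → X) (N : ℕ)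
    (v : Fin e → X) (i : Fin (e - j + 1)) (h : N < (i : ℕ)) :
    ins mm N v i = extend v ((i : ℕ) + j - 1) := by
  rw [ins, if_neg (by omega), if_neg (by omega)]

/- ============ a few more list helpers ============ -/

theorem getD_take (l : List ℕ) {i k : ℕ} (h : i < k) : (l.take k).getD i 0 = l.getD i 0 := by
  induction l generalizing i k with
  | nil => simp
  | cons a l ih =>
    cases k with
    | zero => omega
    | succ k =>
      cases i with
      | zero => simp
      | succ i => simpa using ih (k := k) (by omega)

theorem getD_drop (l : List ℕ) (a t : ℕ) : (l.drop a).getD t 0 = l.getD (a + t) 0 := by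
  induction l generalizing a with
  | nil => simp
  | cons b l ih =>
    cases a with
    | zero => simp
    | succ a => simpa [Nat.succ_add] using ih a

theorem take_drop_getD (l : List ℕ) {k : ℕ} (hk : k < l.length) :
    l.take k ++ [l.getD k 0] ++ l.drop (k + 1) = l := by
  have h1 : l.take (k + 1) = l.take k ++ [l.getD k 0] := by
    rw [List.take_succ, List.getElem?_eq_getElem hk, List.getD_eq_getElem l 0 hk]
    rfl
  rw [← h1, List.take_append_drop]

theorem one_le_length_of_pos_sum {l : List ℕ} (h : 0 < l.sum) : 1 ≤ l.length := by
  cases l with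
  | nil => simp at h
  | cons a l => simp

theorem one_le_sum_of_pos {l : List ℕ} (hpos : ∀ x ∈ l, 0 < x) (hne : 0 < l.length) :
    0 < l.sum := by
  cases l with
  | nil => simp at hne
  | cons a l =>
    have := hpos a (by simp)
    simp only [List.sum_cons]
    omega

theorem extend_ins_lt {X : Type*} [Zero X] {e j : ℕ} (mm : (Fin j → X) → X) (N : ℕ)
    (v : Fin e → X) {q : ℕ} (hq : q < e - j + 1) (h : q < N) :
    extend (ins mm N v) q = extend v q := by
  rw [extend_pos _ hq, ins_eval_lt mm N v _ h]

theorem extend_ins_eq {X : Type*} [Zero X] {e j : ℕ} (mm : (Fin j → X) → X) (N : ℕ)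
    (v : Fin e → X) {q : ℕ} (hq : q < e - j + 1) (h : q = N) :
    extend (ins mm N v) q = mm (fun t => extend v (N + (t : ℕ))) := by
  rw [extend_pos _ hq, ins_eval_eq mm N v _ h]

theorem extend_ins_gt {X : Type*} [Zero X] {e j : ℕ} (mm : (Fin j → X) → X) (N : ℕ)
    (v : Fin e → X) {q : ℕ} (hq : q < e - j + 1) (h : N < q) :
    extend (ins mm N v) q = extend v (q + j - 1) := by
  rw [extend_pos _ hq, ins_eval_gt mm N v _ h]

section Main

variable {Ap A0 Am B : Type*}
  [AddCommGroup Ap] [Module (ZMod 2) Ap]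
  [AddCommGroup A0] [Module (ZMod 2) A0]
  [AddCommGroup Am] [Module (ZMod 2) Am]
  [AddCommGroup B] [Module (ZMod 2) B]

variable (m : (d : ℕ) → MultilinearMap (ZMod 2) (fun _ : Fin d => Ap × A0 × Am) (Ap × A0 × Am))
  (bS : (d : ℕ) → MultilinearMap (ZMod 2) (fun _ : Fin d => Ap × A0 × Am) B)
  (Δp : (d : ℕ) → MultilinearMap (ZMod 2) (fun _ : Fin d => Ap × B) Ap)
  (bp : (d : ℕ) → MultilinearMap (ZMod 2) (fun _ : Fin d => Ap × B) B)

/-- The tuple of `𝐛^Σ`-values of the blocks of a composition (list form), with offset. -/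
def GT {e : ℕ} (w : Fin e → Ap × A0 × Am) (off : ℕ) (l : List ℕ) : Fin l.length → Ap × B :=
  fun i => boldBSigma bS (l.getD i 0) fun t => extend w (off + (l.take (i : ℕ)).sum + (t : ℕ))

theorem GT_blocks {e : ℕ} (w : Fin e → Ap × A0 × Am) (c : Composition e) :
    (fun i : Fin c.length => boldBSigma bS (c.blocksFun i) fun t => w (c.embedding i t))
      = GT bS w 0 c.blocks := by
  funext i
  refine apply2_congr (fun k u => boldBSigma bS k u) ?_ _ _ ?_
  · rw [List.getD_eq_getElem c.blocks 0 i.2]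
    rfl
  · intro t hta htb
    have hlt : 0 + (c.blocks.take (i : ℕ)).sum + t < e := by
      have h2 := (c.embedding i ⟨t, hta⟩).2
      rw [Composition.coe_embedding] at h2
      simpa [Composition.sizeUpTo] using h2
    rw [extend, dif_pos hlt]
    congr 1
    ext
    rw [Composition.coe_embedding]
    simp [Composition.sizeUpTo]

theorem hm_list
    (hm : ∀ d : ℕ, 1 ≤ d → ∀ v : Fin d → Ap × A0 × Am,
      (m d v).1 = ∑ c : Composition d,
        Δp c.length
          (fun i => boldBSigma bS (c.blocksFun i) (fun t => v (c.embedding i t))))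
    {e : ℕ} (he : 1 ≤ e) (w : Fin e → Ap × A0 × Am) :
    (m e w).1 = ∑ l ∈ cs e, Δp l.length (GT bS w 0 l) := by
  rw [hm e he w, sum_cs]
  exact Finset.sum_congr rfl fun c _ => congrArg _ (GT_blocks bS w c)

theorem hB_list
    (hB : ∀ d : ℕ, 1 ≤ d → ∀ v : Fin d → Ap × A0 × Am,
      (∑ j ∈ Finset.Icc 1 d, ∑ n ∈ Finset.range (d - j + 1),
          bS (d - j + 1) (ins (fun w => m j w) n v))
        + ∑ c : Composition d,
            bp c.length
              (fun i => boldBSigma bS (c.blocksFun i) (fun t => v (c.embedding i t)))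
        = 0)
    {e : ℕ} (he : 1 ≤ e) (w : Fin e → Ap × A0 × Am) :
    ∑ j ∈ Finset.Icc 1 e, ∑ n ∈ Finset.range (e - j + 1),
        bS (e - j + 1) (ins (fun u => m j u) n w)
      = ∑ l ∈ cs e, bp l.length (GT bS w 0 l) := by
  refine char2_eq_of_add_eq_zero ?_
  have h2 : ∑ l ∈ cs e, bp l.length (GT bS w 0 l)
      = ∑ c : Composition e, bp c.length
          (fun i => boldBSigma bS (c.blocksFun i) (fun t => w (c.embedding i t))) := by
    rw [sum_cs]
    exact Finset.sum_congr rfl fun c _ => (congrArg _ (GT_blocks bS w c)).symm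
  rw [h2]
  exact hB e he w

/-- The tuple of inputs corresponding to the `k`-th block of `lb`. -/
def wloc {d : ℕ} (v : Fin d → Ap × A0 × Am) (lb : List ℕ) (k : ℕ) :
    Fin (lb.getD k 0) → Ap × A0 × Am :=
  fun t => extend v ((lb.take k).sum + (t : ℕ))

theorem if_coe_update {X : Type*} {len : ℕ} (u : Fin len → X) {k : ℕ} (hk : k < len) (x : X) :
    (fun i : Fin len => if (i : ℕ) = k then x else u i) = Function.update u ⟨k, hk⟩ x := by
  funext i
  rw [Function.update_apply]
  by_cases h : (i : ℕ) = k
  · rw [if_pos h, if_pos (Fin.ext h)]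
  · rw [if_neg h, if_neg (fun hh => h (by rw [hh]))]

theorem bold_fst_eq {e : ℕ} (he : e = 1) (u : Fin e → Ap × A0 × Am) :
    (boldBSigma bS e u).1 = (u ⟨0, by omega⟩).1 := by
  subst he
  rw [boldBSigma, dif_pos rfl]

theorem inner_sum
    (hm : ∀ d : ℕ, 1 ≤ d → ∀ v : Fin d → Ap × A0 × Am,
      (m d v).1 = ∑ c : Composition d,
        Δp c.length
          (fun i => boldBSigma bS (c.blocksFun i) (fun t => v (c.embedding i t))))
    (hB : ∀ d : ℕ, 1 ≤ d → ∀ v : Fin d → Ap × A0 × Am,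
      (∑ j ∈ Finset.Icc 1 d, ∑ n ∈ Finset.range (d - j + 1),
          bS (d - j + 1) (ins (fun w => m j w) n v))
        + ∑ c : Composition d,
            bp c.length
              (fun i => boldBSigma bS (c.blocksFun i) (fun t => v (c.embedding i t)))
        = 0)
    {bk : ℕ} (hbk : 1 ≤ bk) (w : Fin bk → Ap × A0 × Am) :
    ∑ j ∈ Finset.Icc 1 bk, ∑ p ∈ Finset.range (bk - j + 1),
        boldBSigma bS (bk - j + 1) (ins (fun u => m j u) p w)
      = ∑ l' ∈ cs bk,
          ((Δp l'.length (GT bS w 0 l'), bp l'.length (GT bS w 0 l')) : Ap × B) := by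
  have key1 : (∑ j ∈ Finset.Icc 1 bk, ∑ p ∈ Finset.range (bk - j + 1),
      boldBSigma bS (bk - j + 1) (ins (fun u => m j u) p w)).1
      = (m bk w).1 := by
    rw [Prod.fst_sum]
    rw [Finset.sum_eq_single_of_mem bk (Finset.mem_Icc.mpr ⟨hbk, le_refl _⟩)]
    · rw [Prod.fst_sum]
      have hone : bk - bk + 1 = 1 := by omega
      rw [Finset.sum_congr rfl (fun p _ => bold_fst_eq bS hone (ins (fun u => m bk u) p w))]
      have hr : Finset.range (bk - bk + 1) = {0} := by rw [hone]; rfl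
      rw [hr, Finset.sum_singleton]
      have h0 : ((⟨0, by omega⟩ : Fin (bk - bk + 1)) : ℕ) = 0 := rfl
      rw [ins]
      simp only [h0, lt_self_iff_false, if_false, ite_true, if_pos rfl]
      have hfun : (fun t : Fin bk => extend w (0 + (t : ℕ))) = w := by
        funext t
        rw [extend, dif_pos (by simpa using t.2 : 0 + (t : ℕ) < bk)]
        congr 1
        ext
        simp
      rw [hfun]
    · intro j hj hne
      rw [Prod.fst_sum]
      refine Finset.sum_eq_zero fun p _ => ?_
      rw [Finset.mem_Icc] at hj
      have hne1 : ¬ (bk - j + 1 = 1) := by omega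
      rw [boldBSigma, dif_neg hne1]
  have key2 : (∑ j ∈ Finset.Icc 1 bk, ∑ p ∈ Finset.range (bk - j + 1),
      boldBSigma bS (bk - j + 1) (ins (fun u => m j u) p w)).2
      = ∑ l' ∈ cs bk, bp l'.length (GT bS w 0 l') := by
    rw [Prod.snd_sum]
    rw [← hB_list m bS bp hB hbk w]
    refine Finset.sum_congr rfl fun j _ => ?_
    rw [Prod.snd_sum]
    rfl
  refine Prod.ext ?_ ?_
  · rw [key1, Prod.fst_sum, hm_list m bS Δp hm hbk w]
  · rw [key2, Prod.snd_sum]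

/- ============ the four term functions and index finsets ============ -/

variable (d : ℕ)

def T1fin : Finset (Σ _j : ℕ, Σ _n : ℕ, List ℕ) :=
  (Finset.Icc 1 d).sigma fun j => (Finset.range (d - j + 1)).sigma fun _n => cs (d - j + 1)

def T2fin : Finset (Σ _lb : List ℕ, Σ _k : ℕ, Σ _j : ℕ, ℕ) :=
  (cs d).sigma fun lb => (Finset.range lb.length).sigma fun k =>
    (Finset.Icc 1 (lb.getD k 0)).sigma fun j => Finset.range (lb.getD k 0 - j + 1)

def T3fin : Finset (Σ _lb : List ℕ, Σ _k : ℕ, List ℕ) :=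
  (cs d).sigma fun lb => (Finset.range lb.length).sigma fun k => cs (lb.getD k 0)

def T4fin : Finset (Σ _lh : List ℕ, Σ _j : ℕ, ℕ) :=
  (cs d).sigma fun lh => (Finset.Icc 1 lh.length).sigma fun j => Finset.range (lh.length - j + 1)

variable {d}

def F1 (v : Fin d → Ap × A0 × Am) (x : Σ _j : ℕ, Σ _n : ℕ, List ℕ) : Ap :=
  Δp x.2.2.length (GT bS (ins (fun w => m x.1 w) x.2.1 v) 0 x.2.2)

def F2 (v : Fin d → Ap × A0 × Am) (x : Σ _lb : List ℕ, Σ _k : ℕ, Σ _j : ℕ, ℕ) : Ap :=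
  Δp x.1.length (fun i => if (i : ℕ) = x.2.1 then
      boldBSigma bS (x.1.getD x.2.1 0 - x.2.2.1 + 1)
        (ins (fun u => m x.2.2.1 u) x.2.2.2 (wloc v x.1 x.2.1))
    else GT bS v 0 x.1 i)

def F3 (v : Fin d → Ap × A0 × Am) (x : Σ _lb : List ℕ, Σ _k : ℕ, List ℕ) : Ap :=
  Δp x.1.length (fun i => if (i : ℕ) = x.2.1 then
      (Δp x.2.2.length (GT bS (wloc v x.1 x.2.1) 0 x.2.2),
       bp x.2.2.length (GT bS (wloc v x.1 x.2.1) 0 x.2.2))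
    else GT bS v 0 x.1 i)

def F4 (v : Fin d → Ap × A0 × Am) (x : Σ _lh : List ℕ, Σ _j : ℕ, ℕ) : Ap :=
  Δp (x.1.length - x.2.1 + 1)
    (ins (fun u : Fin x.2.1 → Ap × B => ((Δp x.2.1 u, bp x.2.1 u) : Ap × B)) x.2.2
      (GT bS v 0 x.1))

theorem extend_wloc {e : ℕ} (v : Fin e → Ap × A0 × Am) (lb : List ℕ) (k : ℕ) {u : ℕ}
    (hu : u < lb.getD k 0) :
    extend (wloc v lb k) u = extend v ((lb.take k).sum + u) := by
  rw [extend_pos _ hu]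
  rfl

theorem extend_GT {e : ℕ} (w : Fin e → Ap × A0 × Am) (off : ℕ) (l : List ℕ) {i : ℕ}
    (hi : i < l.length) :
    extend (GT bS w off l) i
      = boldBSigma bS (l.getD i 0) (fun t => extend w (off + (l.take i).sum + (t : ℕ))) := by
  rw [extend_pos _ hi]
  rfl

theorem reindex1_term (v : Fin d → Ap × A0 × Am) {j n : ℕ} {l : List ℕ}
    (hj1 : 1 ≤ j) (hn : n < d - j + 1)
    (hlpos : ∀ x ∈ l, 0 < x) (hlsum : l.sum = d - j + 1) :
    F1 m bS Δp v ⟨j, n, l⟩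
      = F2 m bS Δp v ⟨l.set (idx l n) (l.getD (idx l n) 0 + j - 1), idx l n, j,
          n - (l.take (idx l n)).sum⟩ := by
  obtain ⟨hk, hsk, hsk1⟩ := idx_spec l n (by rw [hlsum]; exact hn)
  set k := idx l n with hkdef
  rw [take_succ_sum l k hk] at hsk1
  have hbk1 : 1 ≤ l.getD k 0 := getD_pos_of_mem_pos hlpos hk
  have hgetk : (l.set k (l.getD k 0 + j - 1)).getD k 0 = l.getD k 0 + j - 1 :=
    getD_set_self l _ hk
  have htakek : ∀ i ≤ k, (l.set k (l.getD k 0 + j - 1)).take i = l.take i :=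
    fun i hi => take_set_of_le l k _ hi
  have hlen : l.length = (l.set k (l.getD k 0 + j - 1)).length := by rw [List.length_set]
  have hSkbk : (l.take k).sum + l.getD k 0 ≤ l.sum := by
    rw [← take_succ_sum l k hk]; exact take_sum_le_sum l (k + 1)
  simp only [F1, F2]
  refine apply2_congr (fun a u => Δp a u) hlen _ _ ?_
  intro i hia hib
  by_cases hik : i = k
  · subst hik
    rw [if_pos rfl]
    simp only [GT]
    refine apply2_congr (fun a u => boldBSigma bS a u) (by omega) _ _ ?_
    intro t hta htb
    rw [← extend_pos (ins (fun u => m j u) (n - (l.take k).sum)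
        (wloc v (l.set k (l.getD k 0 + j - 1)) k)) htb]
    try simp only [val_mk]
    rcases lt_trichotomy t (n - (l.take k).sum) with h | h | h
    · rw [extend_ins_lt _ _ _ (by omega) (by omega),
          extend_ins_lt _ _ _ (by omega : t < _ - j + 1) h,
          extend_wloc _ _ _ (by omega), htakek k le_rfl]
      exact extend_congr v (by omega)
    · rw [extend_ins_eq _ _ _ (by omega) (by omega),
          extend_ins_eq _ _ _ (by omega : t < _ - j + 1) h]
      congr 1
      funext s
      have hs := s.isLt
      rw [extend_wloc _ _ _ (by omega), htakek k le_rfl]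
      exact extend_congr v (by omega)
    · rw [extend_ins_gt _ _ _ (by omega) (by omega),
          extend_ins_gt _ _ _ (by omega : t < _ - j + 1) h,
          extend_wloc _ _ _ (by omega), htakek k le_rfl]
      exact extend_congr v (by omega)
  · rw [if_neg (by simpa using hik)]
    simp only [GT]
    refine apply2_congr (fun a u => boldBSigma bS a u)
      ((getD_set_ne l _ hik).symm) _ _ ?_
    intro t hta htb
    try simp only [val_mk]
    rcases lt_or_gt_of_ne hik with hilt | higt
    · have h1 : (l.take (i + 1)).sum ≤ (l.take k).sum := take_sum_mono l (by omega)
      rw [take_succ_sum l i (by omega)] at h1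
      rw [extend_ins_lt _ _ _ (by omega) (by omega), htakek i (le_of_lt hilt)]
    · have hdec_l := take_sum_decomp l higt (le_of_lt hia)
      have hdec_lb := take_sum_decomp (l.set k (l.getD k 0 + j - 1)) higt (by omega)
      rw [hgetk, htakek k le_rfl, drop_succ_set] at hdec_lb
      have hql : 0 + (l.take i).sum + t < d - j + 1 := by
        have h2 : (l.take (i + 1)).sum ≤ l.sum := take_sum_le_sum l (i + 1)
        rw [take_succ_sum l i (by omega)] at h2
        omega
      rw [extend_ins_gt _ _ _ hql (by omega)]
      exact extend_congr v (by omega)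

theorem stepA
    (hm : ∀ d : ℕ, 1 ≤ d → ∀ v : Fin d → Ap × A0 × Am,
      (m d v).1 = ∑ c : Composition d,
        Δp c.length
          (fun i => boldBSigma bS (c.blocksFun i) (fun t => v (c.embedding i t))))
    {d : ℕ} (v : Fin d → Ap × A0 × Am) :
    ∑ j ∈ Finset.Icc 1 d, ∑ n ∈ Finset.range (d - j + 1),
        (m (d - j + 1) (ins (fun w => m j w) n v)).1
      = ∑ x ∈ T2fin d, F2 m bS Δp v x := by
  have h1 : ∑ j ∈ Finset.Icc 1 d, ∑ n ∈ Finset.range (d - j + 1),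
      (m (d - j + 1) (ins (fun w => m j w) n v)).1
      = ∑ x ∈ T1fin d, F1 m bS Δp v x := by
    rw [T1fin, ← Finset.sum_sigma' (Finset.Icc 1 d)
      (fun j => (Finset.range (d - j + 1)).sigma fun _n => cs (d - j + 1))
      (fun j y => F1 m bS Δp v ⟨j, y.1, y.2⟩)]
    refine Finset.sum_congr rfl fun j hj => ?_
    rw [← Finset.sum_sigma' (Finset.range (d - j + 1)) (fun _n => cs (d - j + 1))
      (fun n l => F1 m bS Δp v ⟨j, n, l⟩)]
    refine Finset.sum_congr rfl fun n hn => ?_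
    exact hm_list m bS Δp hm (by omega) _
  rw [h1]
  refine Finset.sum_nbij'
    (i := fun x => ⟨x.2.2.set (idx x.2.2 x.2.1) (x.2.2.getD (idx x.2.2 x.2.1) 0 + x.1 - 1),
      idx x.2.2 x.2.1, x.1, x.2.1 - (x.2.2.take (idx x.2.2 x.2.1)).sum⟩)
    (j := fun y => ⟨y.2.2.1, (y.1.take y.2.1).sum + y.2.2.2,
      y.1.set y.2.1 (y.1.getD y.2.1 0 - y.2.2.1 + 1)⟩) ?_ ?_ ?_ ?_ ?_
  · rintro ⟨j, n, l⟩ hx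
    simp only [T1fin, T2fin, Finset.mem_sigma, Finset.mem_Icc, Finset.mem_range, mem_cs] at hx ⊢
    obtain ⟨⟨hj1, hjd⟩, hn, hlpos, hlsum⟩ := hx
    obtain ⟨hk, hsk, hsk1⟩ := idx_spec l n (by rw [hlsum]; exact hn)
    rw [take_succ_sum l _ hk] at hsk1
    have hbk1 : 1 ≤ l.getD (idx l n) 0 := getD_pos_of_mem_pos hlpos hk
    have hsum := sum_set_nat l (l.getD (idx l n) 0 + j - 1) hk
    refine ⟨⟨fun y hy2 => ?_, by omega⟩, by rw [List.length_set]; exact hk,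
      ⟨hj1, ?_⟩, ?_⟩
    · rcases List.mem_or_eq_of_mem_set hy2 with h | h
      · exact hlpos _ h
      · omega
    · rw [getD_set_self l _ hk]; omega
    · rw [getD_set_self l _ hk]; omega
  · rintro ⟨lb, k, j, p⟩ hy
    simp only [T1fin, T2fin, Finset.mem_sigma, Finset.mem_Icc, Finset.mem_range, mem_cs] at hy ⊢
    obtain ⟨⟨hpos, hsum⟩, hk, ⟨hj1, hjbk⟩, hp⟩ := hy
    have hSkbk : (lb.take k).sum + lb.getD k 0 ≤ d := by
      rw [← hsum, ← take_succ_sum lb k hk]; exact take_sum_le_sum lb (k + 1)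
    have hsum2 := sum_set_nat lb (lb.getD k 0 - j + 1) hk
    have hbk1 : 1 ≤ lb.getD k 0 := getD_pos_of_mem_pos hpos hk
    refine ⟨⟨hj1, by omega⟩, by omega, fun y hy2 => ?_, by omega⟩
    rcases List.mem_or_eq_of_mem_set hy2 with h | h
    · exact hpos _ h
    · omega
  · rintro ⟨j, n, l⟩ hx
    simp only [T1fin, Finset.mem_sigma, Finset.mem_Icc, Finset.mem_range, mem_cs] at hx
    obtain ⟨⟨hj1, hjd⟩, hn, hlpos, hlsum⟩ := hx
    obtain ⟨hk, hsk, hsk1⟩ := idx_spec l n (by rw [hlsum]; exact hn)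
    have hbk1 : 1 ≤ l.getD (idx l n) 0 := getD_pos_of_mem_pos hlpos hk
    have e2 : ((l.set (idx l n) (l.getD (idx l n) 0 + j - 1)).take (idx l n)).sum
        + (n - (l.take (idx l n)).sum) = n := by
      rw [take_set_of_le l _ _ le_rfl]; omega
    have e3 : (l.set (idx l n) (l.getD (idx l n) 0 + j - 1)).set (idx l n)
        ((l.set (idx l n) (l.getD (idx l n) 0 + j - 1)).getD (idx l n) 0 - j + 1) = l := by
      rw [getD_set_self l _ hk, List.set_set,
        show l.getD (idx l n) 0 + j - 1 - j + 1 = l.getD (idx l n) 0 by omega,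
        set_getD_self]
    simp only [e2, e3]
  · rintro ⟨lb, k, j, p⟩ hy
    simp only [T2fin, Finset.mem_sigma, Finset.mem_Icc, Finset.mem_range, mem_cs] at hy
    obtain ⟨⟨hpos, hsum⟩, hk, ⟨hj1, hjbk⟩, hp⟩ := hy
    have hbk1 : 1 ≤ lb.getD k 0 := getD_pos_of_mem_pos hpos hk
    have hidx : idx (lb.set k (lb.getD k 0 - j + 1)) ((lb.take k).sum + p) = k := by
      refine idx_unique _ _ k (by rw [List.length_set]; exact hk) ?_ ?_
      · rw [take_set_of_le lb _ _ le_rfl]; omega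
      · rw [take_succ_sum _ k (by rw [List.length_set]; exact hk),
          take_set_of_le lb _ _ le_rfl, getD_set_self lb _ hk]
        omega
    simp only [hidx]
    have e1 : (lb.set k (lb.getD k 0 - j + 1)).set k
        ((lb.set k (lb.getD k 0 - j + 1)).getD k 0 + j - 1) = lb := by
      rw [getD_set_self lb _ hk, List.set_set,
        show lb.getD k 0 - j + 1 + j - 1 = lb.getD k 0 by omega, set_getD_self]
    have e2 : (lb.take k).sum + p - ((lb.set k (lb.getD k 0 - j + 1)).take k).sum = p := by
      rw [take_set_of_le lb _ _ le_rfl]; omega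
    simp only [e1, e2]
  · rintro ⟨j, n, l⟩ hx
    simp only [T1fin, Finset.mem_sigma, Finset.mem_Icc, Finset.mem_range, mem_cs] at hx
    obtain ⟨⟨hj1, hjd⟩, hn, hlpos, hlsum⟩ := hx
    exact reindex1_term m bS Δp v hj1 hn hlpos hlsum

theorem stepB
    (hm : ∀ d : ℕ, 1 ≤ d → ∀ v : Fin d → Ap × A0 × Am,
      (m d v).1 = ∑ c : Composition d,
        Δp c.length
          (fun i => boldBSigma bS (c.blocksFun i) (fun t => v (c.embedding i t))))
    (hB : ∀ d : ℕ, 1 ≤ d → ∀ v : Fin d → Ap × A0 × Am,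
      (∑ j ∈ Finset.Icc 1 d, ∑ n ∈ Finset.range (d - j + 1),
          bS (d - j + 1) (ins (fun w => m j w) n v))
        + ∑ c : Composition d,
            bp c.length
              (fun i => boldBSigma bS (c.blocksFun i) (fun t => v (c.embedding i t)))
        = 0)
    {d : ℕ} (v : Fin d → Ap × A0 × Am) :
    ∑ x ∈ T2fin d, F2 m bS Δp v x = ∑ x ∈ T3fin d, F3 bS Δp bp v x := by
  rw [T2fin, ← Finset.sum_sigma' (cs d)
      (fun lb => (Finset.range lb.length).sigma fun k =>
        (Finset.Icc 1 (lb.getD k 0)).sigma fun j => Finset.range (lb.getD k 0 - j + 1))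
      (fun lb y => F2 m bS Δp v ⟨lb, y⟩)]
  rw [T3fin, ← Finset.sum_sigma' (cs d)
      (fun lb => (Finset.range lb.length).sigma fun k => cs (lb.getD k 0))
      (fun lb y => F3 bS Δp bp v ⟨lb, y⟩)]
  refine Finset.sum_congr rfl fun lb hlb => ?_
  rw [← Finset.sum_sigma' (Finset.range lb.length) _ (fun k z => F2 m bS Δp v ⟨lb, k, z⟩),
      ← Finset.sum_sigma' (Finset.range lb.length) _ (fun k l' => F3 bS Δp bp v ⟨lb, k, l'⟩)]
  refine Finset.sum_congr rfl fun k hk => ?_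
  rw [← Finset.sum_sigma' (Finset.Icc 1 (lb.getD k 0)) _
      (fun j p => F2 m bS Δp v ⟨lb, k, j, p⟩)]
  rw [Finset.mem_range] at hk
  rw [mem_cs] at hlb
  have hbk1 : 1 ≤ lb.getD k 0 := getD_pos_of_mem_pos hlb.1 hk
  have hupd : ∀ X : Ap × B,
      (fun i : Fin lb.length => if (i : ℕ) = k then X else GT bS v 0 lb i)
        = Function.update (GT bS v 0 lb) ⟨k, hk⟩ X := fun X => if_coe_update _ hk X
  calc ∑ j ∈ Finset.Icc 1 (lb.getD k 0), ∑ p ∈ Finset.range (lb.getD k 0 - j + 1),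
        F2 m bS Δp v ⟨lb, k, j, p⟩
      = ∑ j ∈ Finset.Icc 1 (lb.getD k 0), ∑ p ∈ Finset.range (lb.getD k 0 - j + 1),
          Δp lb.length (Function.update (GT bS v 0 lb) ⟨k, hk⟩
            (boldBSigma bS (lb.getD k 0 - j + 1) (ins (fun u => m j u) p (wloc v lb k)))) := by
        refine Finset.sum_congr rfl fun j _ => Finset.sum_congr rfl fun p _ => ?_
        simp only [F2]
        rw [hupd]
    _ = Δp lb.length (Function.update (GT bS v 0 lb) ⟨k, hk⟩
          (∑ j ∈ Finset.Icc 1 (lb.getD k 0), ∑ p ∈ Finset.range (lb.getD k 0 - j + 1),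
            boldBSigma bS (lb.getD k 0 - j + 1) (ins (fun u => m j u) p (wloc v lb k)))) := by
        rw [MultilinearMap.map_update_sum]
        refine Finset.sum_congr rfl fun j _ => ?_
        rw [MultilinearMap.map_update_sum]
    _ = Δp lb.length (Function.update (GT bS v 0 lb) ⟨k, hk⟩
          (∑ l' ∈ cs (lb.getD k 0), ((Δp l'.length (GT bS (wloc v lb k) 0 l'),
            bp l'.length (GT bS (wloc v lb k) 0 l')) : Ap × B))) := by
        rw [inner_sum m bS Δp bp hm hB hbk1 (wloc v lb k)]
    _ = ∑ l' ∈ cs (lb.getD k 0), F3 bS Δp bp v ⟨lb, k, l'⟩ := by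
        rw [MultilinearMap.map_update_sum]
        refine Finset.sum_congr rfl fun l' _ => ?_
        simp only [F3]
        rw [hupd]

theorem reindex2_term (v : Fin d → Ap × A0 × Am) {lb l' : List ℕ} {k : ℕ}
    (hlbpos : ∀ x ∈ lb, 0 < x) (hlbsum : lb.sum = d) (hk : k < lb.length)
    (hl'pos : ∀ x ∈ l', 0 < x) (hl'sum : l'.sum = lb.getD k 0) :
    F3 bS Δp bp v ⟨lb, k, l'⟩
      = F4 bS Δp bp v ⟨lb.take k ++ l' ++ lb.drop (k + 1), l'.length, k⟩ := by
  have hbk1 : 1 ≤ lb.getD k 0 := getD_pos_of_mem_pos hlbpos hk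
  have hl'1 : 1 ≤ l'.length := one_le_length_of_pos_sum (by omega)
  have htk : (lb.take k).length = k := by rw [List.length_take]; omega
  have h2 : (lb.take k ++ l').length = k + l'.length := by rw [List.length_append, htk]
  have hlh_len : (lb.take k ++ l' ++ lb.drop (k + 1)).length
      = k + l'.length + (lb.length - (k + 1)) := by
    rw [List.length_append, List.length_append, htk, List.length_drop]
  have hlen : lb.length = (lb.take k ++ l' ++ lb.drop (k + 1)).length - l'.length + 1 := by
    omega
  have hts : ∀ i ≤ k, (lb.take k ++ l' ++ lb.drop (k + 1)).take i = lb.take i := by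
    intro i hi
    rw [List.take_append_of_le_length (by omega), List.take_append_of_le_length (by omega),
      List.take_take, Nat.min_eq_left hi]
  simp only [F3, F4]
  refine apply2_congr (fun a u => Δp a u) hlen _ _ ?_
  intro i hia hib
  rw [← extend_pos (ins (fun u : Fin l'.length → Ap × B => ((Δp l'.length u, bp l'.length u) : Ap × B)) k
      (GT bS v 0 (lb.take k ++ l' ++ lb.drop (k + 1)))) hib]
  rcases lt_trichotomy i k with h | h | h
  · rw [if_neg (by simp only [val_mk]; omega)]
    rw [extend_ins_lt _ _ _ hib h]
    rw [extend_GT bS v 0 _ (by omega : i < (lb.take k ++ l' ++ lb.drop (k + 1)).length)]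
    simp only [GT]
    try simp only [val_mk]
    refine apply2_congr (fun a u => boldBSigma bS a u) ?_ _ _ ?_
    · rw [List.getD_append _ _ _ _ (by omega : i < (lb.take k ++ l').length),
        List.getD_append _ _ _ _ (by omega : i < (lb.take k).length), getD_take lb h]
    · intro t hta htb
      try simp only [val_mk]
      rw [hts i (le_of_lt h)]
  · rw [if_pos (by simp only [val_mk]; omega)]
    rw [extend_ins_eq _ _ _ hib h]
    have hX : (fun t : Fin l'.length =>
        extend (GT bS v 0 (lb.take k ++ l' ++ lb.drop (k + 1))) (k + (t : ℕ)))
        = GT bS (wloc v lb k) 0 l' := by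
      funext t
      have ht := t.isLt
      rw [extend_GT bS v 0 _ (by omega : k + (t : ℕ) < (lb.take k ++ l' ++ lb.drop (k + 1)).length)]
      simp only [GT]
      try simp only [val_mk]
      refine apply2_congr (fun a u => boldBSigma bS a u) ?_ _ _ ?_
      · rw [List.append_assoc, List.getD_append_right _ _ _ _ (by omega : (lb.take k).length ≤ k + (t : ℕ)),
          htk, show k + (t : ℕ) - k = (t : ℕ) by omega, List.getD_append _ _ _ _ ht]
      · intro s hsa hsb
        try simp only [val_mk]
        have h1 : ((lb.take k ++ l' ++ lb.drop (k + 1)).take (k + (t : ℕ))).sum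
            = (lb.take k).sum + (l'.take (t : ℕ)).sum := by
          rw [List.append_assoc, show k + (t : ℕ) = (lb.take k).length + (t : ℕ) by rw [htk],
            List.take_length_add_append, List.sum_append,
            List.take_append_of_le_length (le_of_lt ht)]
        have h3 := take_succ_sum l' (t : ℕ) ht
        have h4 : (l'.take ((t : ℕ) + 1)).sum ≤ l'.sum := take_sum_le_sum l' _
        rw [extend_wloc _ _ _ (by omega : 0 + (l'.take (t : ℕ)).sum + s < lb.getD k 0)]
        exact extend_congr v (by omega)
    rw [hX]
  · rw [if_neg (by simp only [val_mk]; omega)]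
    rw [extend_ins_gt _ _ _ hib h]
    rw [extend_GT bS v 0 _ (by omega : i + l'.length - 1 < (lb.take k ++ l' ++ lb.drop (k + 1)).length)]
    simp only [GT]
    try simp only [val_mk]
    have hdec := take_sum_decomp lb h (by omega : i ≤ lb.length)
    have hdec2 : ((lb.take k ++ l' ++ lb.drop (k + 1)).take (i + l'.length - 1)).sum
        = (lb.take k).sum + l'.sum + ((lb.drop (k + 1)).take (i - k - 1)).sum := by
      rw [show i + l'.length - 1 = (lb.take k ++ l').length + (i - k - 1) by omega,
        List.take_length_add_append, List.sum_append, List.sum_append]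
    refine apply2_congr (fun a u => boldBSigma bS a u) ?_ _ _ ?_
    · rw [List.getD_append_right _ _ _ _ (by omega : (lb.take k ++ l').length ≤ i + l'.length - 1),
        h2, show i + l'.length - 1 - (k + l'.length) = i - (k + 1) by omega, getD_drop,
        show k + 1 + (i - (k + 1)) = i by omega]
    · intro t hta htb
      try simp only [val_mk]
      exact extend_congr v (by omega)

theorem stepC {d : ℕ} (v : Fin d → Ap × A0 × Am) :
    ∑ x ∈ T3fin d, F3 bS Δp bp v x = ∑ x ∈ T4fin d, F4 bS Δp bp v x := by
  refine Finset.sum_nbij'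
    (i := fun x => ⟨x.1.take x.2.1 ++ x.2.2 ++ x.1.drop (x.2.1 + 1), x.2.2.length, x.2.1⟩)
    (j := fun y => ⟨y.1.take y.2.2 ++ [((y.1.drop y.2.2).take y.2.1).sum]
        ++ y.1.drop (y.2.2 + y.2.1), y.2.2, (y.1.drop y.2.2).take y.2.1⟩) ?_ ?_ ?_ ?_ ?_
  · rintro ⟨lb, k, l'⟩ hx
    simp only [T3fin, T4fin, Finset.mem_sigma, Finset.mem_Icc, Finset.mem_range, mem_cs] at hx ⊢
    obtain ⟨⟨hlbpos, hlbsum⟩, hk, hl'pos, hl'sum⟩ := hx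
    have hbk1 : 1 ≤ lb.getD k 0 := getD_pos_of_mem_pos hlbpos hk
    have hl'1 : 1 ≤ l'.length := one_le_length_of_pos_sum (by omega)
    have htk : (lb.take k).length = k := by rw [List.length_take]; omega
    have hlh_len : (lb.take k ++ l' ++ lb.drop (k + 1)).length
        = k + l'.length + (lb.length - (k + 1)) := by
      rw [List.length_append, List.length_append, htk, List.length_drop]
    have hsums := sum_take_drop lb k hk
    refine ⟨⟨fun y hy2 => ?_, ?_⟩, ⟨hl'1, by omega⟩, by omega⟩
    · rcases List.mem_append.mp hy2 with h | h
      · rcases List.mem_append.mp h with h | h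
        · exact hlbpos _ (List.mem_of_mem_take h)
        · exact hl'pos _ h
      · exact hlbpos _ (List.mem_of_mem_drop h)
    · rw [List.sum_append, List.sum_append]; omega
  · rintro ⟨lh, j', n'⟩ hy
    simp only [T3fin, T4fin, Finset.mem_sigma, Finset.mem_Icc, Finset.mem_range, mem_cs] at hy ⊢
    obtain ⟨⟨hpos, hsum⟩, ⟨hj'1, hj'len⟩, hn'⟩ := hy
    have hseg_len : ((lh.drop n').take j').length = j' := by
      rw [List.length_take, List.length_drop]; omega
    have hsegpos : ∀ x ∈ (lh.drop n').take j', 0 < x := fun x hx =>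
      hpos x (List.mem_of_mem_drop (List.mem_of_mem_take hx))
    have hsegsum : 0 < ((lh.drop n').take j').sum := one_le_sum_of_pos hsegpos (by omega)
    have hdecomp : lh.take n' ++ ((lh.drop n').take j' ++ lh.drop (n' + j')) = lh := by
      rw [← List.drop_drop, List.take_append_drop, List.take_append_drop]
    have htk : (lh.take n').length = n' := by rw [List.length_take]; omega
    have hgetd : ((lh.take n' ++ [((lh.drop n').take j').sum] ++ lh.drop (n' + j')).getD n' 0)
        = ((lh.drop n').take j').sum := by
      rw [List.getD_append _ _ _ _ (by rw [List.length_append, htk, List.length_singleton]; omega),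
        List.getD_append_right _ _ _ _ (by omega : (lh.take n').length ≤ n'), htk]
      simp
    have hlb_len : (lh.take n' ++ [((lh.drop n').take j').sum] ++ lh.drop (n' + j')).length
        = n' + 1 + (lh.length - (n' + j')) := by
      rw [List.length_append, List.length_append, htk, List.length_drop]
      simp
    have hlb_sum : (lh.take n' ++ [((lh.drop n').take j').sum] ++ lh.drop (n' + j')).sum
        = lh.sum := by
      conv_rhs => rw [← hdecomp]
      rw [List.sum_append, List.sum_append, List.sum_append, List.sum_append]
      simp only [List.sum_cons, List.sum_nil]
      omega
    refine ⟨⟨fun y hy2 => ?_, by omega⟩, by omega, hsegpos, by rw [hgetd]⟩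
    rcases List.mem_append.mp hy2 with h | h
    · rcases List.mem_append.mp h with h | h
      · exact hpos _ (List.mem_of_mem_take h)
      · simp only [List.mem_singleton] at h
        omega
    · exact hpos _ (List.mem_of_mem_drop h)
  · rintro ⟨lb, k, l'⟩ hx
    simp only [T3fin, Finset.mem_sigma, Finset.mem_range, mem_cs] at hx
    obtain ⟨⟨hlbpos, hlbsum⟩, hk, hl'pos, hl'sum⟩ := hx
    have htk : (lb.take k).length = k := by rw [List.length_take]; omega
    have e_seg : ((lb.take k ++ l' ++ lb.drop (k + 1)).drop k).take l'.length = l' := by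
      rw [List.append_assoc, drop_append_left _ _ _ htk, List.take_left]
    have e_take : (lb.take k ++ l' ++ lb.drop (k + 1)).take k = lb.take k := by
      rw [List.take_append_of_le_length (by rw [List.length_append, htk]; omega),
        List.take_append_of_le_length (by omega : k ≤ (lb.take k).length),
        List.take_take, Nat.min_self]
    have e_drop : (lb.take k ++ l' ++ lb.drop (k + 1)).drop (k + l'.length)
        = lb.drop (k + 1) := by
      rw [show k + l'.length = (lb.take k ++ l').length from by rw [List.length_append, htk],
        List.drop_left]
    simp only [e_seg, e_take, e_drop, hl'sum]
    rw [take_drop_getD lb hk]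
  · rintro ⟨lh, j', n'⟩ hy
    simp only [T4fin, Finset.mem_sigma, Finset.mem_Icc, Finset.mem_range, mem_cs] at hy
    obtain ⟨⟨hpos, hsum⟩, ⟨hj'1, hj'len⟩, hn'⟩ := hy
    have htk : (lh.take n').length = n' := by rw [List.length_take]; omega
    have hseg_len : ((lh.drop n').take j').length = j' := by
      rw [List.length_take, List.length_drop]; omega
    have e_take : (lh.take n' ++ [((lh.drop n').take j').sum] ++ lh.drop (n' + j')).take n'
        = lh.take n' := by
      rw [List.take_append_of_le_length (by rw [List.length_append, htk]; omega),
        List.take_append_of_le_length (by omega : n' ≤ (lh.take n').length),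
        List.take_take, Nat.min_self]
    have e_drop : (lh.take n' ++ [((lh.drop n').take j').sum] ++ lh.drop (n' + j')).drop (n' + 1)
        = lh.drop (n' + j') := by
      rw [show n' + 1 = (lh.take n' ++ [((lh.drop n').take j').sum]).length from by
          rw [List.length_append, htk]; simp,
        List.drop_left]
    have hdecomp : lh.take n' ++ ((lh.drop n').take j' ++ lh.drop (n' + j')) = lh := by
      rw [← List.drop_drop, List.take_append_drop, List.take_append_drop]
    simp only [e_take, e_drop, hseg_len]
    rw [← List.append_assoc] at hdecomp
    rw [hdecomp]
  · rintro ⟨lb, k, l'⟩ hx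
    simp only [T3fin, Finset.mem_sigma, Finset.mem_range, mem_cs] at hx
    obtain ⟨⟨hlbpos, hlbsum⟩, hk, hl'pos, hl'sum⟩ := hx
    exact reindex2_term bS Δp bp v hlbpos hlbsum hk hl'pos hl'sum

end Main

theorem relinf_plus
    (m : (d : ℕ) → MultilinearMap (ZMod 2) (fun _ : Fin d => Ap × A0 × Am) (Ap × A0 × Am))
    (bS : (d : ℕ) → MultilinearMap (ZMod 2) (fun _ : Fin d => Ap × A0 × Am) B)
    (Δp : (d : ℕ) → MultilinearMap (ZMod 2) (fun _ : Fin d => Ap × B) Ap)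
    (bp : (d : ℕ) → MultilinearMap (ZMod 2) (fun _ : Fin d => Ap × B) B)
    -- the A₊-component of m_d is `Σ_j Σ_{compositions} Δ_j^+ ∘ (𝐛^Σ ⊗ ⋯ ⊗ 𝐛^Σ)`
    (hm : ∀ d : ℕ, 1 ≤ d → ∀ v : Fin d → Ap × A0 × Am,
      (m d v).1 = ∑ c : Composition d,
        Δp c.length
          (fun i => boldBSigma bS (c.blocksFun i) (fun t => v (c.embedding i t))))
    -- (A)
    (hA : ∀ d : ℕ, 1 ≤ d → ∀ v : Fin d → Ap × B,
      ∑ j ∈ Finset.Icc 1 d, ∑ n ∈ Finset.range (d - j + 1),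
        Δp (d - j + 1)
          (ins (fun w : Fin j → Ap × B => ((Δp j w, bp j w) : Ap × B)) n v) = 0)
    -- (B)
    (hB : ∀ d : ℕ, 1 ≤ d → ∀ v : Fin d → Ap × A0 × Am,
      (∑ j ∈ Finset.Icc 1 d, ∑ n ∈ Finset.range (d - j + 1),
          bS (d - j + 1) (ins (fun w => m j w) n v))
        + ∑ c : Composition d,
            bp c.length
              (fun i => boldBSigma bS (c.blocksFun i) (fun t => v (c.embedding i t)))
        = 0) :
    -- Equation (relinf+)
    ∀ d : ℕ, 1 ≤ d → ∀ v : Fin d → Ap × A0 × Am,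
      ∑ j ∈ Finset.Icc 1 d, ∑ n ∈ Finset.range (d - j + 1),
        (m (d - j + 1) (ins (fun w => m j w) n v)).1 = 0 := by
  intro d hd v
  rw [stepA m bS Δp hm v, stepB m bS Δp bp hm hB v, stepC bS Δp bp v]
  rw [T4fin, ← Finset.sum_sigma' (cs d)
      (fun lh => (Finset.Icc 1 lh.length).sigma fun j => Finset.range (lh.length - j + 1))
      (fun lh y => F4 bS Δp bp v ⟨lh, y⟩)]
  refine Finset.sum_eq_zero fun lh hlh => ?_
  rw [← Finset.sum_sigma' (Finset.Icc 1 lh.length) _ (fun j n => F4 bS Δp bp v ⟨lh, j, n⟩)]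
  rw [mem_cs] at hlh
  have h1 : 1 ≤ lh.length := one_le_length_of_pos_sum (by omega)
  have h2 := hA lh.length h1 (GT bS v 0 lh)
  simp only [F4]
  exact h2

end LegoutStmt9
end
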